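/- If M is a supported model of a propositional program P and M additionally is the least model of a Horn program contained in GL(P,M) whose clauses all have bodies satisfied by M, then being stable and being supported coincide for P whenever every atom of M has a unique supporting clause forming no cyclic dependencies; in particular, if the atom dependency graph of GL(P,M) restricted to M is acyclic and T_P(M) = M, then M is a stable model of P. -/
import Mathlib


/-- A propositional clause `head ← pos, ¬ neg`. -/
structure Clause where
  head : ℕ
  pos : Finset ℕ
  neg : Finset ℕ
deriving DecidableEq

/-- The Horn clause obtained by stripping the negative literals. -/
def Clause.horn (c : Clause) : Clause := ⟨c.head, c.pos, ∅⟩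

/-- The Gelfond–Lifschitz reduct of `P` relative to `M`. -/
def glReduct (P : Finset Clause) (M : Set ℕ) : Set Clause :=
  {d | ∃ c ∈ P, (∀ r ∈ c.neg, r ∉ M) ∧ d = c.horn}

/-- `M` is a model of the Horn program `Q` (negative literals are ignored). -/
def IsHornModel (Q : Set Clause) (M : Set ℕ) : Prop :=
  ∀ c ∈ Q, (↑c.pos : Set ℕ) ⊆ M → c.head ∈ M

/-- The least model of a Horn program. -/
def leastModel (Q : Set Clause) : Set ℕ := ⋂₀ {M | IsHornModel Q M}

/-- `M` is a stable model of `P`. -/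
def IsStable (P : Finset Clause) (M : Set ℕ) : Prop := M = leastModel (glReduct P M)

/-- The one-step provability operator `T_P`. -/
def TP (P : Finset Clause) (M : Set ℕ) : Set ℕ :=
  {a | ∃ c ∈ P, c.head = a ∧ (↑c.pos : Set ℕ) ⊆ M ∧ ∀ r ∈ c.neg, r ∉ M}

/-- The positive dependency relation of `glReduct(P,M)` restricted to `M`, using only
clauses whose bodies are satisfied by `M`: there is an edge from each body atom
to the head. -/
def DepEdge (P : Finset Clause) (M : Set ℕ) (a b : ℕ) : Prop :=
  ∃ c ∈ P, (∀ r ∈ c.neg, r ∉ M) ∧ c.head = b ∧ a ∈ c.pos ∧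
    (↑c.pos : Set ℕ) ⊆ M ∧ a ∈ M ∧ b ∈ M

/-- If `M` is a supported model of `P` and the atom dependency graph of `glReduct(P,M)`
restricted to `M` is acyclic, then `M` is a stable model of `P`. -/
theorem supported_acyclic_is_stable (P : Finset Clause) (M : Set ℕ)
    (hsupp : TP P M = M)
    (hacyc : ∀ a : ℕ, ¬ Relation.TransGen (DepEdge P M) a a) :
    IsStable P M := by
  set r := DepEdge P M with hr
  -- the finite set of possible edge sources
  set S : Finset ℕ := P.biUnion (fun c => c.pos) with hSdef
  have hS : ∀ {b x : ℕ}, r b x → b ∈ S := by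
    rintro b x ⟨c, hc, _, _, hb, _⟩
    exact Finset.mem_biUnion.2 ⟨c, hc, hb⟩
  have hfin : ∀ a : ℕ, {b | Relation.TransGen r b a}.Finite := by
    intro a
    apply S.finite_toSet.subset
    intro b hb
    obtain ⟨x, hx, -⟩ := Relation.TransGen.head'_iff.1 hb
    exact hS hx
  set f : ℕ → ℕ := fun a => (hfin a).toFinset.card with hf
  have hlt : ∀ {b a : ℕ}, r b a → f b < f a := by
    intro b a hba
    apply Finset.card_lt_card
    constructor
    · intro x hx
      simp only [Set.Finite.mem_toFinset, Set.mem_setOf_eq] at *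
      exact hx.trans (Relation.TransGen.single hba)
    · intro hsub
      have hb : b ∈ (hfin a).toFinset := by
        simp only [Set.Finite.mem_toFinset, Set.mem_setOf_eq]
        exact Relation.TransGen.single hba
      have := hsub hb
      simp only [Set.Finite.mem_toFinset, Set.mem_setOf_eq] at this
      exact hacyc b this
  have hwf : WellFounded r :=
    Subrelation.wf (fun h => hlt h) (InvImage.wf f Nat.lt_wfRel.wf)
  -- M is a model of the reduct
  have hmodel : IsHornModel (glReduct P M) M := by
    rintro c ⟨c', hc', hneg, rfl⟩ hpos
    have : c'.head ∈ TP P M := ⟨c', hc', rfl, hpos, hneg⟩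
    rwa [hsupp] at this
  -- every element of M is in every model of the reduct
  have key : ∀ a : ℕ, a ∈ M → ∀ N : Set ℕ, IsHornModel (glReduct P M) N → a ∈ N := by
    intro a
    induction a using hwf.induction with
    | _ a ih =>
      intro ha N hN
      have : a ∈ TP P M := by rw [hsupp]; exact ha
      obtain ⟨c, hc, hhead, hpos, hneg⟩ := this
      have hhorn : c.horn ∈ glReduct P M := ⟨c, hc, hneg, rfl⟩
      have : c.horn.head ∈ N := by
        apply hN _ hhorn
        intro b hb
        have hbpos : b ∈ c.pos := hb
        have hedge : r b a := ⟨c, hc, hneg, hhead, hbpos, hpos, hpos hb, ha⟩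
        exact ih b hedge (hpos hb) N hN
      rwa [Clause.horn, hhead] at this
  apply Set.eq_of_subset_of_subset
  · intro a ha
    exact Set.mem_sInter.2 fun N hN => key a ha N hN
  · exact Set.sInter_subset_of_mem hmodel
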